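/- For the free permutation rack on a finite set of r orbits, the rank of HR_n is r(r−1)^{n−1} = (r−1)^n + (r−1)^{n−1} for all n ≥ 1, and HR_n is a free abelian group. -/

import Mathlib

/-- Rack chains: free abelian group on `n`-tuples. -/
abbrev CR (X : Type) (n : ℕ) : Type := (Fin n → X) →₀ ℤ

/-- The monomial basis element. -/
noncomputable def mon {X : Type} {n : ℕ} (w : Fin n → X) : CR X n := Finsupp.single w 1

/-- Delete the `(i+1)`-st entry (1-indexed `k = i+1`). -/
def del {X : Type} {n : ℕ} (w : Fin (n+1) → X) (i : Fin n) : Fin n → X :=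
  fun j => if (j : ℕ) < (i : ℕ) then w j.castSucc else w j.succ

/-- Delete the `(i+1)`-st entry and act with it on all later entries. -/
def act {X : Type} (op : X → X → X) {n : ℕ} (w : Fin (n+1) → X) (i : Fin n) : Fin n → X :=
  fun j => if (j : ℕ) < (i : ℕ) then w j.castSucc else op (w i.castSucc) (w j.succ)

/-- Rack differential on a monomial. -/
noncomputable def dMon {X : Type} (op : X → X → X) {n : ℕ} (w : Fin (n+1) → X) : CR X n :=
  ∑ i : Fin n, ((-1 : ℤ) ^ (i : ℕ)) • (mon (del w i) - mon (act op w i))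

/-- The rack differential `CR_{n+1} → CR_n`. -/
noncomputable def d {X : Type} (op : X → X → X) (n : ℕ) : CR X (n+1) →+ CR X n :=
  Finsupp.liftAddHom fun w => zmultiplesHom _ (dMon op w)

/-- Left concatenation `w ↦ x·w`. -/
noncomputable def consHom {X : Type} (x : X) (n : ℕ) : CR X n →+ CR X (n+1) :=
  Finsupp.liftAddHom fun w => zmultiplesHom _ (mon (Fin.cons x w))

/-- Diagonal action of a map `φ` on chains. -/
noncomputable def mapChains {X : Type} (φ : X → X) (n : ℕ) : CR X n →+ CR X n :=
  Finsupp.liftAddHom fun w => zmultiplesHom _ (mon (φ ∘ w))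

/-- Cycles. -/
noncomputable def ZC {X : Type} (op : X → X → X) : (n : ℕ) → AddSubgroup (CR X n)
  | 0 => ⊤
  | (m+1) => (d op m).ker

/-- Boundaries. -/
noncomputable def BC {X : Type} (op : X → X → X) (n : ℕ) : AddSubgroup (CR X n) :=
  (d op n).range

/-- Rack homology. -/
abbrev HR (X : Type) (op : X → X → X) (n : ℕ) : Type :=
  ZC op n ⧸ ((BC op n).addSubgroupOf (ZC op n))

/-- The rack operation of a permutation rack. -/
def permOp {X : Type} (φ : X ≃ X) : X → X → X := fun _ y => φ y

/-- Multiplication by an element of `ℤX`. -/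
noncomputable def mulChain {X : Type} (v : X →₀ ℤ) (n : ℕ) : CR X n →+ CR X (n+1) :=
  ∑ x ∈ v.support, v x • consHom x n

/-- The rack operation of the free permutation rack `ℤ × S`. -/
def shiftOp (S : Type) : ℤ × S → ℤ × S → ℤ × S := fun _ p => (p.1 + 1, p.2)

/-!
Write a word as `x · w` with `x = (e, s)`. The rack differential of `ℤ × S` satisfies
`d (x · w) = w - t w - x · d w`, where `t` raises every exponent by one. The partial-sum change
of variables `untwist` turns `t` into a shift of the first letter only, so that
`D (x · w) = (τᵉ - τᵉ⁺¹) w - x · D w` with `τ` shifting the exponent of the head of `w`.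
Fix `s₀ ∈ S`. The homotopy `H (x · w) = -(0, s₀) · (N_x · w) - ((0, s) - (0, s₀)) · H w`, where
`N_x = (0, s) + (1, s) + ⋯ + (e - 1, s)`, contracts this complex onto the span of the cycles
`((0, s₁) - (0, s₀)) ⋯ ((0, sₙ) - (0, s₀)) · (0, s)` with all `sᵢ ≠ s₀`; there are
`r (r - 1)ⁿ` of them in degree `n + 1`.
-/

open Finsupp

theorem Finsupp.addHom_ext_int {α M : Type*} [AddMonoid M] {f g : (α →₀ ℤ) →+ M}
    (h : ∀ a, f (single a 1) = g (single a 1)) : f = g :=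
  addHom_ext' fun a => AddMonoidHom.ext_int (h a)

section RackChains

variable {X : Type}

theorem CR.addHom_ext {n : ℕ} {M : Type*} [AddMonoid M] {f g : CR X n →+ M}
    (h : ∀ w, f (mon w) = g (mon w)) : f = g :=
  Finsupp.addHom_ext_int h

@[simp]
theorem d_mon (op : X → X → X) (n : ℕ) (w : Fin (n+1) → X) : d op n (mon w) = dMon op w := by
  simp [d, mon]

theorem consHom_mon (x : X) {n : ℕ} (w : Fin n → X) :
    consHom x n (mon w) = mon (Fin.cons x w) := by
  simp [consHom, mon]

@[simp]
theorem mapChains_mon (φ : X → X) {n : ℕ} (w : Fin n → X) :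
    mapChains φ n (mon w) = mon (φ ∘ w) := by
  simp [mapChains, mon]

theorem mapChains_mapChains (φ ψ : X → X) (n : ℕ) (z : CR X n) :
    mapChains φ n (mapChains ψ n z) = mapChains (φ ∘ ψ) n z := by
  suffices (mapChains φ n).comp (mapChains ψ n) = mapChains (φ ∘ ψ) n from
    DFunLike.congr_fun this z
  exact CR.addHom_ext fun w => by simp [Function.comp_assoc]

theorem mapChains_consHom (φ : X → X) (x : X) (n : ℕ) (z : CR X n) :
    mapChains φ (n+1) (consHom x n z) = consHom (φ x) n (mapChains φ n z) := by
  suffices (mapChains φ (n+1)).comp (consHom x n) = (consHom (φ x) n).comp (mapChains φ n) from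
    DFunLike.congr_fun this z
  exact CR.addHom_ext fun w => by simp [consHom_mon, Fin.comp_cons]

theorem mulChain_eq_liftAddHom (v : X →₀ ℤ) (n : ℕ) :
    mulChain v n = liftAddHom (fun x => zmultiplesHom _ (consHom x n)) v := by
  simp [mulChain, liftAddHom_apply, Finsupp.sum]

@[simp]
theorem mulChain_zero (n : ℕ) : mulChain (0 : X →₀ ℤ) n = 0 := by
  simp [mulChain_eq_liftAddHom]

theorem mulChain_add (v v' : X →₀ ℤ) (n : ℕ) :
    mulChain (v + v') n = mulChain v n + mulChain v' n := by
  simp [mulChain_eq_liftAddHom]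

theorem mulChain_sub (v v' : X →₀ ℤ) (n : ℕ) :
    mulChain (v - v') n = mulChain v n - mulChain v' n := by
  simp only [mulChain_eq_liftAddHom, map_sub]

@[simp]
theorem mulChain_single (x : X) (n : ℕ) : mulChain (single x 1) n = consHom x n := by
  simp [mulChain_eq_liftAddHom]

noncomputable def consLift {n : ℕ} {M : Type*} [AddCommGroup M] (F : X → CR X n →+ M) :
    CR X (n+1) →+ M :=
  liftAddHom fun w => zmultiplesHom _ (F (w 0) (mon (Fin.tail w)))

@[simp]
theorem consLift_consHom {n : ℕ} {M : Type*} [AddCommGroup M] (F : X → CR X n →+ M) (x : X)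
    (z : CR X n) : consLift F (consHom x n z) = F x z := by
  suffices (consLift F).comp (consHom x n) = F x from DFunLike.congr_fun this z
  refine CR.addHom_ext fun w => ?_
  rw [AddMonoidHom.comp_apply, consHom_mon]
  simp [consLift, mon]

theorem CR.addHom_ext_cons {n : ℕ} {M : Type*} [AddMonoid M] {f g : CR X (n+1) →+ M}
    (h : ∀ x w, f (consHom x n (mon w)) = g (consHom x n (mon w))) : f = g :=
  CR.addHom_ext fun w => by simpa [consHom_mon, Fin.cons_self_tail] using h (w 0) (Fin.tail w)

theorem del_cons_zero {n : ℕ} (x : X) (w : Fin (n+1) → X) : del (Fin.cons x w) 0 = w := by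
  funext j; simp [del]

theorem act_cons_zero (op : X → X → X) {n : ℕ} (x : X) (w : Fin (n+1) → X) :
    act op (Fin.cons x w) 0 = op x ∘ w := by
  funext j; simp [act]

theorem del_cons_succ {n : ℕ} (x : X) (w : Fin (n+1) → X) (i : Fin n) :
    del (Fin.cons x w) i.succ = Fin.cons x (del w i) := by
  funext j
  refine Fin.cases (by simp [del]) (fun k => ?_) j
  by_cases h : (k : ℕ) < i <;> simp [del, h]

theorem act_cons_succ (op : X → X → X) {n : ℕ} (x : X) (w : Fin (n+1) → X) (i : Fin n) :
    act op (Fin.cons x w) i.succ = Fin.cons x (act op w i) := by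
  funext j
  refine Fin.cases (by simp [act]) (fun k => ?_) j
  by_cases h : (k : ℕ) < i <;> simp [act, h]

theorem dMon_cons (op : X → X → X) {n : ℕ} (x : X) (w : Fin (n+1) → X) :
    dMon op (Fin.cons x w) = mon w - mon (op x ∘ w) - consHom x n (dMon op w) := by
  simp only [dMon, Fin.sum_univ_succ, Fin.val_zero, pow_zero, one_smul, Fin.val_succ, pow_succ,
    del_cons_zero, act_cons_zero, del_cons_succ, act_cons_succ, map_sum, map_zsmul, map_sub,
    consHom_mon, mul_neg_one, neg_smul, Finset.sum_neg_distrib]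
  abel

theorem d_consHom (op : X → X → X) (x : X) (n : ℕ) (z : CR X (n+1)) :
    d op (n+1) (consHom x (n+1) z) = z - mapChains (op x) (n+1) z - consHom x n (d op n z) := by
  suffices (d op (n+1)).comp (consHom x (n+1)) =
      .id _ - mapChains (op x) (n+1) - (consHom x n).comp (d op n) from
    DFunLike.congr_fun this z
  exact CR.addHom_ext fun w => by simp [consHom_mon, dMon_cons]

theorem d_mapChains (op : X → X → X) {φ : X → X} (hφ : ∀ x y, φ (op x y) = op (φ x) (φ y))
    (n : ℕ) (z : CR X (n+1)) : d op n (mapChains φ (n+1) z) = mapChains φ n (d op n z) := by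
  suffices (d op n).comp (mapChains φ (n+1)) = (mapChains φ n).comp (d op n) from
    DFunLike.congr_fun this z
  refine CR.addHom_ext fun w => ?_
  have hdel (i : Fin n) : del (φ ∘ w) i = φ ∘ del w i := by
    funext j; by_cases h : (j : ℕ) < i <;> simp [del, h]
  have hact (i : Fin n) : act op (φ ∘ w) i = φ ∘ act op w i := by
    funext j; by_cases h : (j : ℕ) < i <;> simp [act, h, hφ]
  simp [dMon, hdel, hact, map_sum, map_zsmul]

end RackChains

theorem Int.eq_of_sub_add_one_eq_sub_add_one {A : Type*} [AddCommGroup A] {F G : ℤ → A}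
    (h0 : F 0 = G 0) (h : ∀ q, F (q + 1) - F q = G (q + 1) - G q) (q : ℤ) : F q = G q := by
  have hper : Function.Periodic (fun q => F q - G q) 1 := fun q =>
    sub_eq_sub_iff_sub_eq_sub.mp (h q)
  simpa [h0, sub_eq_zero] using hper.int_mul_eq q

noncomputable def homologyEquivOfRetract {A B C M : Type*} [AddCommGroup A] [AddCommGroup B]
    [AddCommGroup C] [AddCommGroup M] (d₁ : A →+ B) (d₀ : B →+ C) (ι : M →+ B) (π : B →+ M)
    (h₁ : B →+ A) (h₀ : C →+ B) (hπι : π.comp ι = .id M) (hdι : d₀.comp ι = 0)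
    (hπd : π.comp d₁ = 0) (hh : d₁.comp h₁ + h₀.comp d₀ = .id B - ι.comp π) :
    d₀.ker ⧸ d₁.range.addSubgroupOf d₀.ker ≃+ M :=
  let f : d₀.ker →+ M := π.comp d₀.ker.subtype
  have hf : Function.Surjective f := fun m =>
    ⟨⟨ι m, DFunLike.congr_fun hdι m⟩, DFunLike.congr_fun hπι m⟩
  have hker : d₁.range.addSubgroupOf d₀.ker = f.ker := by
    ext ⟨c, hc⟩
    rw [AddSubgroup.mem_addSubgroupOf, AddMonoidHom.mem_ker]
    constructor
    · rintro ⟨a, rfl⟩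
      exact DFunLike.congr_fun hπd a
    · intro hπc
      have := DFunLike.congr_fun hh c
      simp only [AddMonoidHom.add_apply, AddMonoidHom.comp_apply, AddMonoidHom.sub_apply,
        AddMonoidHom.id_apply] at this
      exact ⟨h₁ c, by simpa [(AddMonoidHom.mem_ker).mp hc, show π c = 0 from hπc] using this⟩
  (QuotientAddGroup.quotientAddEquivOfEq hker).trans
    (QuotientAddGroup.quotientKerEquivOfSurjective f hf)

theorem subsingleton_HR_of_isEmpty {X : Type} [IsEmpty X] (op : X → X → X) (n : ℕ) :
    Subsingleton (HR X op (n+1)) :=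
  QuotientAddGroup.mk_surjective.subsingleton

namespace FreePermRack

variable {S : Type}

def shiftBy (m : ℤ) : ℤ × S ≃ ℤ × S := (Equiv.addRight m).prodCongr (Equiv.refl S)

@[simp]
theorem shiftBy_apply (m : ℤ) (x : ℤ × S) : shiftBy m x = (x.1 + m, x.2) := rfl

theorem shiftBy_comp_shiftBy (m k : ℤ) :
    ⇑(shiftBy m) ∘ ⇑(shiftBy k) = ⇑(shiftBy (S := S) (k + m)) := by
  funext x; simp [add_assoc]

theorem shiftOp_eq_shiftBy (x : ℤ × S) : shiftOp S x = shiftBy 1 := rfl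

theorem shiftBy_shiftOp (m : ℤ) (x y : ℤ × S) :
    shiftBy m (shiftOp S x y) = shiftOp S (shiftBy m x) (shiftBy m y) := by
  simp [shiftOp, add_right_comm]

/-- Partial sums of exponents: `(x₁, …, xₙ) ↦ (x₁, tᵉ¹ x₂, tᵉ¹⁺ᵉ² x₃, …)`, where `eᵢ` is the
exponent of `xᵢ` and `t` raises exponents by one. -/
def untwist : (n : ℕ) → (Fin n → ℤ × S) ≃ (Fin n → ℤ × S)
  | 0 => Equiv.refl _
  | n+1 => (Fin.consEquiv fun _ => ℤ × S).symm.trans <|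
      (Equiv.prodShear (Equiv.refl _) fun x =>
        (untwist n).trans ((Equiv.refl _).arrowCongr (shiftBy x.1))).trans
      (Fin.consEquiv fun _ => ℤ × S)

theorem untwist_cons {n : ℕ} (x : ℤ × S) (u : Fin n → ℤ × S) :
    untwist (n+1) (Fin.cons x u) = Fin.cons x (shiftBy x.1 ∘ untwist n u) := by
  simp [untwist, Fin.consEquiv, Equiv.prodShear, Equiv.arrowCongr]

noncomputable def untwistChains (n : ℕ) : CR (ℤ × S) n ≃+ CR (ℤ × S) n :=
  Finsupp.domCongr (untwist n)

@[simp]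
theorem untwistChains_mon {n : ℕ} (w : Fin n → ℤ × S) :
    untwistChains n (mon w) = mon (untwist n w) := by
  simp [untwistChains, mon]

theorem untwistChains_consHom (x : ℤ × S) (n : ℕ) (z : CR (ℤ × S) n) :
    untwistChains (n+1) (consHom x n z) =
      consHom x n (mapChains (shiftBy x.1) n (untwistChains n z)) := by
  suffices (untwistChains (n+1)).toAddMonoidHom.comp (consHom x n) =
      (consHom x n).comp ((mapChains (shiftBy x.1) n).comp (untwistChains n).toAddMonoidHom) from
    DFunLike.congr_fun this z
  exact CR.addHom_ext fun w => by simp [consHom_mon, untwist_cons]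

noncomputable def shiftHead (m : ℤ) (n : ℕ) : CR (ℤ × S) (n+1) →+ CR (ℤ × S) (n+1) :=
  consLift fun x => consHom (shiftBy m x) n

@[simp]
theorem shiftHead_consHom (m : ℤ) (x : ℤ × S) (n : ℕ) (z : CR (ℤ × S) n) :
    shiftHead m n (consHom x n z) = consHom (shiftBy m x) n z := by
  simp [shiftHead]

theorem untwistChains_shiftHead (m : ℤ) (n : ℕ) (z : CR (ℤ × S) (n+1)) :
    untwistChains (n+1) (shiftHead m n z) =
      mapChains (shiftBy m) (n+1) (untwistChains (n+1) z) := by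
  suffices (untwistChains (n+1)).toAddMonoidHom.comp (shiftHead m n) =
      (mapChains (shiftBy m) (n+1)).comp (untwistChains (n+1)).toAddMonoidHom from
    DFunLike.congr_fun this z
  refine CR.addHom_ext_cons fun x w => ?_
  simp [untwistChains_consHom, mapChains_consHom, ← Function.comp_assoc,
    shiftBy_comp_shiftBy]

noncomputable def headDiff (m : ℤ) (n : ℕ) : CR (ℤ × S) (n+1) →+ CR (ℤ × S) (n+1) :=
  shiftHead m n - shiftHead (m+1) n

/-- The rack differential conjugated by `untwistChains` (see `d_untwistChains`). -/
noncomputable def untwistedD : (n : ℕ) → CR (ℤ × S) (n+1) →+ CR (ℤ × S) n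
  | 0 => 0
  | n+1 => consLift fun x => headDiff x.1 n - (consHom x n).comp (untwistedD n)

@[simp]
theorem untwistedD_zero : untwistedD (S := S) 0 = 0 := rfl

@[simp]
theorem untwistedD_consHom (x : ℤ × S) (n : ℕ) (z : CR (ℤ × S) (n+1)) :
    untwistedD (n+1) (consHom x (n+1) z) = headDiff x.1 n z - consHom x n (untwistedD n z) := by
  simp [untwistedD]

theorem d_untwistChains (n : ℕ) (z : CR (ℤ × S) (n+1)) :
    d (shiftOp S) n (untwistChains (n+1) z) = untwistChains n (untwistedD n z) := by
  induction n with
  | zero =>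
    suffices (d (shiftOp S) 0).comp (untwistChains 1).toAddMonoidHom = 0 by
      simpa [untwistedD] using DFunLike.congr_fun this z
    exact CR.addHom_ext fun w => by simp [dMon]
  | succ n ih =>
    suffices (d (shiftOp S) (n+1)).comp (untwistChains (n+2)).toAddMonoidHom =
        (untwistChains (n+1)).toAddMonoidHom.comp (untwistedD (n+1)) from
      DFunLike.congr_fun this z
    refine CR.addHom_ext_cons fun x w => ?_
    simp only [AddMonoidHom.comp_apply, AddEquiv.coe_toAddMonoidHom]
    rw [untwistChains_consHom, d_consHom, shiftOp_eq_shiftBy,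
      d_mapChains _ (shiftBy_shiftOp x.1), ih, untwistedD_consHom, map_sub, headDiff,
      AddMonoidHom.sub_apply, map_sub, untwistChains_shiftHead, untwistChains_shiftHead,
      untwistChains_consHom, mapChains_mapChains, shiftBy_comp_shiftBy]

theorem untwistChains_symm_d (n : ℕ) (z : CR (ℤ × S) (n+1)) :
    (untwistChains n).symm (d (shiftOp S) n z) =
      untwistedD n ((untwistChains (n+1)).symm z) := by
  rw [AddEquiv.symm_apply_eq, ← d_untwistChains, AddEquiv.apply_symm_apply]

theorem shiftHead_zero_apply (n : ℕ) (z : CR (ℤ × S) (n+1)) : shiftHead 0 n z = z := by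
  suffices shiftHead (S := S) 0 n = .id _ from DFunLike.congr_fun this z
  exact CR.addHom_ext_cons fun x w => by simp

theorem headDiff_consHom (m : ℤ) (x : ℤ × S) (n : ℕ) (z : CR (ℤ × S) n) :
    headDiff m n (consHom x n z) =
      consHom (shiftBy m x) n z - consHom (shiftBy (m+1) x) n z := by
  simp [headDiff]

/-- `orbitSum (q, s) = ∑_{0 ≤ i < q} (i, s)`, and `-∑_{q ≤ i < 0} (i, s)` when `q < 0`. -/
noncomputable def orbitSum (x : ℤ × S) : ℤ × S →₀ ℤ :=
  ∑ i ∈ Finset.Ico 0 x.1, single (i, x.2) 1 - ∑ i ∈ Finset.Ico x.1 0, single (i, x.2) 1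

theorem orbitSum_zero (s : S) : orbitSum (0, s) = 0 := by
  simp [orbitSum]

theorem orbitSum_add_one (q : ℤ) (s : S) :
    orbitSum (q + 1, s) = orbitSum (q, s) + single (q, s) 1 := by
  simp only [orbitSum]
  rcases le_or_gt 0 q with hq | hq
  · rw [Finset.Ico_eq_empty (a := q + 1) (b := 0) (by omega),
      Finset.Ico_eq_empty (a := q) (b := 0) (by omega),
      show Finset.Ico 0 (q + 1) = insert q (Finset.Ico 0 q) by ext; simp; omega,
      Finset.sum_insert (by simp)]
    abel
  · rw [Finset.Ico_eq_empty (a := 0) (b := q + 1) (by omega),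
      Finset.Ico_eq_empty (a := 0) (b := q) (by omega),
      show Finset.Ico q 0 = insert q (Finset.Ico (q + 1) 0) by ext; simp; omega,
      Finset.sum_insert (by simp)]
    abel

theorem headDiff_zero_mulChain_orbitSum (x : ℤ × S) (n : ℕ) (z : CR (ℤ × S) n) :
    headDiff 0 n (mulChain (orbitSum x) n z) = consHom (0, x.2) n z - consHom x n z := by
  refine Int.eq_of_sub_add_one_eq_sub_add_one
    (F := fun q => headDiff 0 n (mulChain (orbitSum (q, x.2)) n z))
    (G := fun q => consHom (0, x.2) n z - consHom (q, x.2) n z) ?_ (fun q => ?_) x.1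
  · simp [orbitSum_zero]
  · simp [orbitSum_add_one, mulChain_add, headDiff_consHom]

theorem untwistedD_mulChain_orbitSum (x : ℤ × S) (n : ℕ) (z : CR (ℤ × S) (n+1)) :
    untwistedD (n+1) (mulChain (orbitSum x) (n+1) z) =
      z - shiftHead x.1 n z - mulChain (orbitSum x) n (untwistedD n z) := by
  refine Int.eq_of_sub_add_one_eq_sub_add_one
    (F := fun q => untwistedD (n+1) (mulChain (orbitSum (q, x.2)) (n+1) z))
    (G := fun q => z - shiftHead q n z - mulChain (orbitSum (q, x.2)) n (untwistedD n z))
    ?_ (fun q => ?_) x.1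
  · simp [orbitSum_zero, shiftHead_zero_apply]
  · simp [orbitSum_add_one, mulChain_add, headDiff]
    abel

variable (s₀ : S)

noncomputable def orbitDiff (s : S) : ℤ × S →₀ ℤ := single (0, s) 1 - single (0, s₀) 1

theorem mulChain_orbitDiff (s : S) (n : ℕ) (z : CR (ℤ × S) n) :
    mulChain (orbitDiff s₀ s) n z = consHom (0, s) n z - consHom (0, s₀) n z := by
  simp [orbitDiff, mulChain_sub]

theorem untwistedD_mulChain_orbitDiff (s : S) (n : ℕ) (z : CR (ℤ × S) (n+1)) :
    untwistedD (n+1) (mulChain (orbitDiff s₀ s) (n+1) z) =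
      -mulChain (orbitDiff s₀ s) n (untwistedD n z) := by
  simp [mulChain_orbitDiff]

/-- Contracts the untwisted complex onto the span of the cycles `cycle` below. -/
noncomputable def homotopy : (n : ℕ) → CR (ℤ × S) n →+ CR (ℤ × S) (n+1)
  | 0 => 0
  | n+1 => consLift fun x => -(consHom (0, s₀) (n+1)).comp (mulChain (orbitSum x) n) -
      (mulChain (orbitDiff s₀ x.2) (n+1)).comp (homotopy n)

@[simp]
theorem homotopy_zero : homotopy s₀ 0 = 0 := rfl

@[simp]
theorem homotopy_consHom (x : ℤ × S) (n : ℕ) (z : CR (ℤ × S) n) :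
    homotopy s₀ (n+1) (consHom x n z) = -consHom (0, s₀) (n+1) (mulChain (orbitSum x) n z) -
      mulChain (orbitDiff s₀ x.2) (n+1) (homotopy s₀ n z) := by
  simp [homotopy]

theorem homotopy_headDiff (m : ℤ) (n : ℕ) (z : CR (ℤ × S) (n+1)) :
    homotopy s₀ (n+1) (headDiff m n z) = consHom (0, s₀) (n+1) (shiftHead m n z) := by
  suffices (homotopy s₀ (n+1)).comp (headDiff m n) =
      (consHom (0, s₀) (n+1)).comp (shiftHead m n) from DFunLike.congr_fun this z
  refine CR.addHom_ext_cons fun x w => ?_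
  simp [headDiff_consHom, ← add_assoc, orbitSum_add_one, mulChain_add]

theorem untwistedD_homotopy_consHom (x : ℤ × S) (n : ℕ) (w : CR (ℤ × S) (n+1)) :
    untwistedD (n+2) (homotopy s₀ (n+2) (consHom x (n+1) w)) =
      consHom x (n+1) w - consHom (0, x.2) (n+1) w +
        consHom (0, s₀) (n+1)
          (w - shiftHead x.1 n w - mulChain (orbitSum x) n (untwistedD n w)) +
        mulChain (orbitDiff s₀ x.2) (n+1) (untwistedD (n+1) (homotopy s₀ (n+1) w)) := by
  rw [homotopy_consHom, map_sub, map_neg, untwistedD_consHom, untwistedD_mulChain_orbitDiff,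
    headDiff_zero_mulChain_orbitSum, untwistedD_mulChain_orbitSum]
  abel

theorem homotopy_untwistedD_consHom (x : ℤ × S) (n : ℕ) (w : CR (ℤ × S) (n+1)) :
    homotopy s₀ (n+1) (untwistedD (n+1) (consHom x (n+1) w)) =
      consHom (0, s₀) (n+1) (shiftHead x.1 n w) +
        consHom (0, s₀) (n+1) (mulChain (orbitSum x) n (untwistedD n w)) +
        mulChain (orbitDiff s₀ x.2) (n+1) (homotopy s₀ n (untwistedD n w)) := by
  rw [untwistedD_consHom, map_sub, homotopy_headDiff, homotopy_consHom]
  abel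

abbrev CycleIndex (n : ℕ) : Type := (Fin n → {s : S // s ≠ s₀}) × S

variable {s₀} in
def CycleIndex.cons {n : ℕ} (s : {s : S // s ≠ s₀}) (p : CycleIndex s₀ n) : CycleIndex s₀ (n+1) :=
  (Fin.cons s p.1, p.2)

/-- `cycle (s₁, …, sₙ, s) = (s₁ - s₀) ⋯ (sₙ - s₀) · s`, all letters with exponent `0`. -/
noncomputable def cycle : (n : ℕ) → (CycleIndex s₀ n →₀ ℤ) →+ CR (ℤ × S) (n+1)
  | 0 => mapDomain.addMonoidHom fun p _ => (0, p.2)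
  | n+1 => liftAddHom fun p => zmultiplesHom _
      (mulChain (orbitDiff s₀ (p.1 0)) (n+1) (cycle n (single (Fin.tail p.1, p.2) 1)))

theorem cycle_mapDomain_cons {n : ℕ} (s : {s : S // s ≠ s₀}) (v : CycleIndex s₀ n →₀ ℤ) :
    cycle s₀ (n+1) (mapDomain (CycleIndex.cons s) v) =
      mulChain (orbitDiff s₀ s) (n+1) (cycle s₀ n v) := by
  suffices (cycle s₀ (n+1)).comp (mapDomain.addMonoidHom (CycleIndex.cons s)) =
      (mulChain (orbitDiff s₀ s) (n+1)).comp (cycle s₀ n) from DFunLike.congr_fun this v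
  exact Finsupp.addHom_ext_int fun p => by simp [cycle, CycleIndex.cons]

theorem cycle_zero_single (p : CycleIndex s₀ 0) :
    cycle s₀ 0 (single p 1) = consHom (0, p.2) 0 (mon Fin.elim0) := by
  rw [consHom_mon]
  simp only [cycle, mon, mapDomain.addMonoidHom_apply, mapDomain_single]
  congr 1
  funext i
  rw [Fin.fin_one_eq_zero i]
  rfl

theorem untwistedD_cycle (n : ℕ) (v : CycleIndex s₀ n →₀ ℤ) :
    untwistedD n (cycle s₀ n v) = 0 := by
  induction n with
  | zero => rfl
  | succ n ih =>
    suffices (untwistedD (n+1)).comp (cycle s₀ (n+1)) = 0 from DFunLike.congr_fun this v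
    refine Finsupp.addHom_ext_int fun p => ?_
    simp [cycle, untwistedD_mulChain_orbitDiff, ih]

variable [DecidableEq S]

noncomputable def cycleCoeff : (n : ℕ) → CR (ℤ × S) (n+1) →+ (CycleIndex s₀ n →₀ ℤ)
  | 0 => consLift fun x => mapDomain.addMonoidHom fun _ => (Fin.elim0, x.2)
  | n+1 => consLift fun x => if h : x.2 = s₀ then 0 else
      (mapDomain.addMonoidHom (CycleIndex.cons ⟨x.2, h⟩)).comp (cycleCoeff n)

@[simp]
theorem cycleCoeff_zero_consHom (x : ℤ × S) (z : CR (ℤ × S) 0) :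
    cycleCoeff s₀ 0 (consHom x 0 z) = mapDomain (fun _ => (Fin.elim0, x.2)) z := by
  simp [cycleCoeff]

theorem cycleCoeff_consHom_of_eq {x : ℤ × S} (h : x.2 = s₀) (n : ℕ) (z : CR (ℤ × S) (n+1)) :
    cycleCoeff s₀ (n+1) (consHom x (n+1) z) = 0 := by
  simp [cycleCoeff, h]

theorem cycleCoeff_consHom_of_ne {x : ℤ × S} (h : x.2 ≠ s₀) (n : ℕ) (z : CR (ℤ × S) (n+1)) :
    cycleCoeff s₀ (n+1) (consHom x (n+1) z) =
      mapDomain (CycleIndex.cons ⟨x.2, h⟩) (cycleCoeff s₀ n z) := by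
  simp [cycleCoeff, h]

theorem cycleCoeff_shiftHead (m : ℤ) (n : ℕ) (z : CR (ℤ × S) (n+1)) :
    cycleCoeff s₀ n (shiftHead m n z) = cycleCoeff s₀ n z := by
  suffices (cycleCoeff s₀ n).comp (shiftHead m n) = cycleCoeff s₀ n from
    DFunLike.congr_fun this z
  cases n with
  | zero => exact CR.addHom_ext_cons fun x w => by simp
  | succ n => exact CR.addHom_ext_cons fun x w => by simp [cycleCoeff]

theorem cycleCoeff_cycle (n : ℕ) (v : CycleIndex s₀ n →₀ ℤ) :
    cycleCoeff s₀ n (cycle s₀ n v) = v := by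
  induction n with
  | zero =>
    suffices (cycleCoeff s₀ 0).comp (cycle s₀ 0) = .id _ from DFunLike.congr_fun this v
    refine Finsupp.addHom_ext_int fun p => ?_
    simp only [AddMonoidHom.comp_apply, cycle_zero_single, cycleCoeff_zero_consHom, mon,
      mapDomain_single, AddMonoidHom.id_apply]
    exact congrArg (single · 1) (Prod.ext (Subsingleton.elim _ _) rfl)
  | succ n ih =>
    suffices (cycleCoeff s₀ (n+1)).comp (cycle s₀ (n+1)) = .id _ from DFunLike.congr_fun this v
    refine Finsupp.addHom_ext_int fun ⟨u, s⟩ => ?_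
    have hu : CycleIndex.cons (u 0) (Fin.tail u, s) = (u, s) := by simp [CycleIndex.cons]
    rw [← hu, ← mapDomain_single]
    simp only [AddMonoidHom.comp_apply, cycle_mapDomain_cons, mulChain_orbitDiff, map_sub,
      cycleCoeff_consHom_of_ne s₀ (x := (0, u 0)) (u 0).2,
      cycleCoeff_consHom_of_eq s₀ (x := (0, s₀)) rfl, ih]
    simp

theorem cycleCoeff_headDiff (m : ℤ) (n : ℕ) (z : CR (ℤ × S) (n+1)) :
    cycleCoeff s₀ n (headDiff m n z) = 0 := by
  simp [headDiff, cycleCoeff_shiftHead]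

theorem cycleCoeff_untwistedD (n : ℕ) (z : CR (ℤ × S) (n+2)) :
    cycleCoeff s₀ n (untwistedD (n+1) z) = 0 := by
  induction n with
  | zero =>
    suffices (cycleCoeff s₀ 0).comp (untwistedD 1) = 0 from DFunLike.congr_fun this z
    exact CR.addHom_ext_cons fun x w => by simp [cycleCoeff_headDiff]
  | succ n ih =>
    suffices (cycleCoeff s₀ (n+1)).comp (untwistedD (n+2)) = 0 from DFunLike.congr_fun this z
    refine CR.addHom_ext_cons fun x w => ?_
    by_cases h : x.2 = s₀
    · simp [cycleCoeff_headDiff, cycleCoeff_consHom_of_eq s₀ h]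
    · simp [cycleCoeff_headDiff, cycleCoeff_consHom_of_ne s₀ h, ih]

theorem cycle_cycleCoeff_zero_consHom (x : ℤ × S) (z : CR (ℤ × S) 0) :
    cycle s₀ 0 (cycleCoeff s₀ 0 (consHom x 0 z)) = consHom (0, x.2) 0 z := by
  suffices (cycle s₀ 0).comp ((cycleCoeff s₀ 0).comp (consHom x 0)) = consHom (0, x.2) 0 from
    DFunLike.congr_fun this z
  refine CR.addHom_ext fun w => ?_
  rw [Subsingleton.elim w Fin.elim0, AddMonoidHom.comp_apply, AddMonoidHom.comp_apply,
    cycleCoeff_zero_consHom, mon, mapDomain_single, cycle_zero_single]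
  rfl

theorem cycle_cycleCoeff_consHom (x : ℤ × S) (n : ℕ) (z : CR (ℤ × S) (n+1)) :
    cycle s₀ (n+1) (cycleCoeff s₀ (n+1) (consHom x (n+1) z)) =
      mulChain (orbitDiff s₀ x.2) (n+1) (cycle s₀ n (cycleCoeff s₀ n z)) := by
  by_cases h : x.2 = s₀
  · simp [cycleCoeff_consHom_of_eq s₀ h, orbitDiff, h]
  · rw [cycleCoeff_consHom_of_ne s₀ h, cycle_mapDomain_cons]

theorem untwistedD_homotopy_add_homotopy_untwistedD (n : ℕ) (z : CR (ℤ × S) (n+1)) :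
    untwistedD (n+1) (homotopy s₀ (n+1) z) + homotopy s₀ n (untwistedD n z) =
      z - cycle s₀ n (cycleCoeff s₀ n z) := by
  induction n with
  | zero =>
    suffices (untwistedD 1).comp (homotopy s₀ 1) = .id _ - (cycle s₀ 0).comp (cycleCoeff s₀ 0) by
      simpa using DFunLike.congr_fun this z
    refine CR.addHom_ext_cons fun x w => ?_
    simp only [AddMonoidHom.comp_apply, AddMonoidHom.sub_apply, AddMonoidHom.id_apply,
      homotopy_consHom, homotopy_zero, AddMonoidHom.zero_apply, map_zero, sub_zero, map_neg,
      untwistedD_consHom, untwistedD_zero, headDiff_zero_mulChain_orbitSum,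
      cycle_cycleCoeff_zero_consHom]
    abel
  | succ n ih =>
    suffices (untwistedD (n+2)).comp (homotopy s₀ (n+2)) +
        (homotopy s₀ (n+1)).comp (untwistedD (n+1)) =
        .id _ - (cycle s₀ (n+1)).comp (cycleCoeff s₀ (n+1)) from DFunLike.congr_fun this z
    refine CR.addHom_ext_cons fun x w => ?_
    have hDH := eq_sub_of_add_eq (ih (mon w))
    simp only [AddMonoidHom.add_apply, AddMonoidHom.comp_apply, AddMonoidHom.sub_apply,
      AddMonoidHom.id_apply, untwistedD_homotopy_consHom, homotopy_untwistedD_consHom, hDH,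
      cycle_cycleCoeff_consHom, map_sub, mulChain_orbitDiff]
    abel

noncomputable def homologyEquiv (n : ℕ) :
    HR (ℤ × S) (shiftOp S) (n+1) ≃+ (CycleIndex s₀ n →₀ ℤ) :=
  let Φ (k : ℕ) := (untwistChains (S := S) k).toAddMonoidHom
  let Ψ (k : ℕ) := (untwistChains (S := S) k).symm.toAddMonoidHom
  homologyEquivOfRetract (d (shiftOp S) (n+1)) (d (shiftOp S) n)
    ((Φ (n+1)).comp (cycle s₀ n)) ((cycleCoeff s₀ n).comp (Ψ (n+1)))
    ((Φ (n+2)).comp ((homotopy s₀ (n+1)).comp (Ψ (n+1))))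
    ((Φ (n+1)).comp ((homotopy s₀ n).comp (Ψ n)))
    (AddMonoidHom.ext fun v => by simp [Ψ, Φ, cycleCoeff_cycle])
    (AddMonoidHom.ext fun v => by simp [Φ, d_untwistChains, untwistedD_cycle])
    (AddMonoidHom.ext fun z => by simp [Ψ, untwistChains_symm_d, cycleCoeff_untwistedD])
    (AddMonoidHom.ext fun z => by
      simp [Φ, Ψ, d_untwistChains, untwistChains_symm_d, ← map_add,
        untwistedD_homotopy_add_homotopy_untwistedD])

theorem card_cycleIndex [Fintype S] {r : ℕ} (hr : Fintype.card S = r) (n : ℕ) :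
    Fintype.card (CycleIndex s₀ n) = r * (r - 1) ^ n := by
  simp [Fintype.card_subtype_compl, hr, mul_comm]

end FreePermRack

open FreePermRack in
/-- The free permutation rack on a finite set of `r` orbits has free abelian rack
homology, of rank `r(r−1)^{n−1} = (r−1)^n + (r−1)^{n−1}` in each degree `n ≥ 1`. -/
theorem free_rack_betti (S : Type) [Fintype S] (r : ℕ) (hr : Fintype.card S = r) (n : ℕ) :
    Nonempty (HR (ℤ × S) (shiftOp S) (n+1) ≃+ (Fin (r * (r-1)^n) → ℤ)) ∧
      (r : ℤ) * ((r : ℤ) - 1) ^ n = ((r : ℤ) - 1) ^ (n+1) + ((r : ℤ) - 1) ^ n := by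
  refine ⟨?_, by ring⟩
  classical
  rcases isEmpty_or_nonempty S with _ | ⟨⟨s₀⟩⟩
  · obtain rfl : r = 0 := hr ▸ Fintype.card_eq_zero
    rw [zero_mul]
    have := subsingleton_HR_of_isEmpty (shiftOp S) n
    have := uniqueOfSubsingleton (0 : HR (ℤ × S) (shiftOp S) (n+1))
    exact ⟨AddEquiv.ofUnique⟩
  · exact ⟨(homologyEquiv s₀ n).trans <| (Finsupp.domCongr
      (Fintype.equivFinOfCardEq (card_cycleIndex s₀ hr n))).trans Finsupp.addEquivFunOnFinite⟩
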